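/- Fix N ∈ ℕ, N ≥ 2. For every x ∈ 𝔼_N (functions x : {0,1,…,N} → ℝ with x(0) = x(N) = 0, extended by 0 outside {0,…,N}) the following chain of inequalities holds: (1/4)‖x‖_{𝔼_N} ≤ (1/2)‖x‖_{Δ_N} ≤ ‖x‖_N ≤ √N ‖x‖_{∞_N} ≤ N ‖x‖_{Δ_N} ≤ N² ‖x‖_{𝔼_N}. -/
import Mathlib


/-- Membership in `𝔼_N`: functions `x : {0,…,N} → ℝ` with `x 0 = x N = 0`,
extended by `0` outside `{0,…,N}` (modelled as functions on `ℤ`). -/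
def inEN (N : ℕ) (x : ℤ → ℝ) : Prop :=
  x 0 = 0 ∧ x (N:ℤ) = 0 ∧ ∀ k : ℤ, (k < 0 ∨ (N:ℤ) < k) → x k = 0

/-- `‖x‖_N = (∑_{i=1}^{N−1} |x(i)|²)^{1/2}`. -/
noncomputable def normN (N : ℕ) (x : ℤ → ℝ) : ℝ :=
  Real.sqrt (∑ i ∈ Finset.Icc (1:ℤ) ((N:ℤ)-1), (x i)^2)

/-- `‖x‖_{Δ_N} = (∑_{i=1}^{N} |Δx(i−1)|²)^{1/2}` where `Δx(i−1) = x(i) − x(i−1)`. -/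
noncomputable def normDelta (N : ℕ) (x : ℤ → ℝ) : ℝ :=
  Real.sqrt (∑ i ∈ Finset.Icc (1:ℤ) (N:ℤ), (x i - x (i-1))^2)

/-- `‖x‖_{𝔼_N} = (∑_{i=1}^{N−1} |Δ²x(i−1)|²)^{1/2}` where
`Δ²x(i−1) = x(i+1) − 2x(i) + x(i−1)`. -/
noncomputable def normE (N : ℕ) (x : ℤ → ℝ) : ℝ :=
  Real.sqrt (∑ i ∈ Finset.Icc (1:ℤ) ((N:ℤ)-1), (x (i+1) - 2 * x i + x (i-1))^2)

/-- `‖x‖_{∞_N} = max_{0 ≤ k ≤ N} |x(k)|`. -/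
noncomputable def normInf (N : ℕ) (x : ℤ → ℝ) : ℝ :=
  sSup ((fun k => |x k|) '' Set.Icc (0:ℤ) (N:ℤ))

lemma sum_Icc_int_eq_range (n : ℕ) (F : ℤ → ℝ) :
    ∑ i ∈ Finset.Icc (1:ℤ) (n:ℤ), F i = ∑ i ∈ Finset.range n, F ((i:ℤ)+1) := by
  induction n with
  | zero => simp
  | succ n ih =>
    have h1 : Finset.Icc (1:ℤ) ((n:ℤ)+1) = insert ((n:ℤ)+1) (Finset.Icc (1:ℤ) (n:ℤ)) := by
      ext k; simp only [Finset.mem_Icc, Finset.mem_insert]; omega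
    have h2 : ((n:ℤ)+1) ∉ Finset.Icc (1:ℤ) (n:ℤ) := by simp
    rw [Finset.sum_range_succ, ← ih]
    push_cast
    rw [h1, Finset.sum_insert h2, add_comm]

set_option maxHeartbeats 1000000 in
/-- For every `x ∈ 𝔼_N` (with `N ≥ 2`) the chain of inequalities
`(1/4)‖x‖_{𝔼_N} ≤ (1/2)‖x‖_{Δ_N} ≤ ‖x‖_N ≤ √N ‖x‖_{∞_N} ≤ N ‖x‖_{Δ_N} ≤ N² ‖x‖_{𝔼_N}`
holds. -/
theorem discrete_norm_inequalities (N : ℕ) (hN : 2 ≤ N) (x : ℤ → ℝ) (hx : inEN N x) :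
    (1/4 : ℝ) * normE N x ≤ (1/2 : ℝ) * normDelta N x ∧
    (1/2 : ℝ) * normDelta N x ≤ normN N x ∧
    normN N x ≤ Real.sqrt N * normInf N x ∧
    Real.sqrt N * normInf N x ≤ (N:ℝ) * normDelta N x ∧
    (N:ℝ) * normDelta N x ≤ (N:ℝ)^2 * normE N x := by
  obtain ⟨hx0, hxN, -⟩ := hx
  set f : ℕ → ℝ := fun i => x (i : ℤ) with hfdef
  set g : ℕ → ℝ := fun i => f (i+1) - f i with hgdef
  have hf0 : f 0 = 0 := by simpa [hfdef] using hx0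
  have hfN : f N = 0 := hxN
  -- telescoping
  have htel : ∀ m : ℕ, ∑ i ∈ Finset.range m, g i = f m := by
    intro m
    rw [hgdef]
    rw [Finset.sum_range_sub (fun i => f i) m, hf0, sub_zero]
  set SΔ : ℝ := ∑ i ∈ Finset.range N, (g i)^2 with hSΔ
  set SN : ℝ := ∑ i ∈ Finset.range (N-1), (f (i+1))^2 with hSN
  set SE : ℝ := ∑ i ∈ Finset.range (N-1), (g (i+1) - g i)^2 with hSE
  have hSΔ0 : 0 ≤ SΔ := Finset.sum_nonneg fun i _ => sq_nonneg _
  have hSN0 : 0 ≤ SN := Finset.sum_nonneg fun i _ => sq_nonneg _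
  have hSE0 : 0 ≤ SE := Finset.sum_nonneg fun i _ => sq_nonneg _
  have hN1 : ((N:ℤ)-1) = ((N-1 : ℕ):ℤ) := by omega
  -- norm identities
  have hDelta : normDelta N x = Real.sqrt SΔ := by
    unfold normDelta
    rw [sum_Icc_int_eq_range N (fun i => (x i - x (i-1))^2)]
    congr 1
    refine Finset.sum_congr rfl fun i _ => ?_
    simp only [hgdef, hfdef]
    push_cast
    ring_nf
  have hNn : normN N x = Real.sqrt SN := by
    unfold normN
    rw [hN1, sum_Icc_int_eq_range (N-1) (fun i => (x i)^2)]
    congr 1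
  have hE : normE N x = Real.sqrt SE := by
    unfold normE
    rw [hN1, sum_Icc_int_eq_range (N-1) (fun i => (x (i+1) - 2 * x i + x (i-1))^2)]
    congr 1
    refine Finset.sum_congr rfl fun i _ => ?_
    simp only [hgdef, hfdef]
    push_cast
    ring_nf
  -- normInf facts
  have hIccfin : ((fun k => |x k|) '' Set.Icc (0:ℤ) (N:ℤ)).Finite :=
    (Set.finite_Icc _ _).image _
  have hMle : ∀ k ∈ Set.Icc (0:ℤ) (N:ℤ), |x k| ≤ normInf N x := by
    intro k hk
    exact le_csSup hIccfin.bddAbove ⟨k, hk, rfl⟩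
  have hMub : ∀ C : ℝ, (∀ k ∈ Set.Icc (0:ℤ) (N:ℤ), |x k| ≤ C) → normInf N x ≤ C := by
    intro C hC
    have hne : ((fun k => |x k|) '' Set.Icc (0:ℤ) (N:ℤ)).Nonempty :=
      Set.Nonempty.image _ ⟨0, by simp⟩
    apply csSup_le hne
    rintro y ⟨k, hk, rfl⟩
    exact hC k hk
  have hM0 : 0 ≤ normInf N x :=
    le_trans (abs_nonneg _) (hMle 0 (by simp))
  set M := normInf N x
  -- sum shifts
  have hNsub : N - 1 + 1 = N := by omega
  have hshiftg : ∑ i ∈ Finset.range (N-1), (g (i+1))^2 ≤ SΔ := by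
    have h := Finset.sum_range_succ' (fun i => (g i)^2) (N-1)
    rw [hNsub] at h
    rw [hSΔ, h]
    nlinarith [sq_nonneg (g 0)]
  have hlowg : ∑ i ∈ Finset.range (N-1), (g i)^2 ≤ SΔ := by
    apply Finset.sum_le_sum_of_subset_of_nonneg
    · exact Finset.range_subset_range.2 (by omega)
    · intro i _ _; exact sq_nonneg _
  -- (1) SE ≤ 4 SΔ
  have hSE4 : SE ≤ 4 * SΔ := by
    have h1 : SE ≤ ∑ i ∈ Finset.range (N-1), (2*(g (i+1))^2 + 2*(g i)^2) := by
      apply Finset.sum_le_sum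
      intro i _
      nlinarith [sq_nonneg (g (i+1) + g i)]
    rw [Finset.sum_add_distrib, ← Finset.mul_sum, ← Finset.mul_sum] at h1
    nlinarith
  -- (2) SΔ ≤ 4 SN
  have hSΔ4 : SΔ ≤ 4 * SN := by
    have h1 : SΔ ≤ ∑ i ∈ Finset.range N, (2*(f (i+1))^2 + 2*(f i)^2) := by
      apply Finset.sum_le_sum
      intro i _
      simp only [hgdef]
      nlinarith [sq_nonneg (f (i+1) + f i)]
    have h2 : ∑ i ∈ Finset.range N, (f (i+1))^2 = SN := by
      have h := Finset.sum_range_succ (fun i => (f (i+1))^2) (N-1)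
      rw [hNsub] at h
      rw [h, hfN, hSN]
      ring
    have h3 : ∑ i ∈ Finset.range N, (f i)^2 = SN := by
      have h := Finset.sum_range_succ' (fun i => (f i)^2) (N-1)
      rw [hNsub] at h
      rw [h, hf0, hSN]
      ring
    rw [Finset.sum_add_distrib, ← Finset.mul_sum, ← Finset.mul_sum, h2, h3] at h1
    linarith
  -- (3) SN ≤ N * M^2
  have hSNM : SN ≤ (N:ℝ) * M^2 := by
    have h1 : SN ≤ ∑ _i ∈ Finset.range (N-1), M^2 := by
      apply Finset.sum_le_sum
      intro i hi
      have : |f (i+1)| ≤ M := by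
        apply hMle
        simp only [Set.mem_Icc]
        constructor
        · positivity
        · simp only [Finset.mem_range] at hi; omega
      calc (f (i+1))^2 = |f (i+1)|^2 := (sq_abs _).symm
        _ ≤ M^2 := by nlinarith [abs_nonneg (f (i+1))]
    rw [Finset.sum_const, Finset.card_range, nsmul_eq_mul] at h1
    have : ((N-1:ℕ):ℝ) ≤ (N:ℝ) := by exact_mod_cast Nat.sub_le N 1
    nlinarith [sq_nonneg M]
  -- (4) M ≤ sqrt N * sqrt SΔ
  have hB1 : ∀ m : ℕ, m ≤ N → |f m| ≤ ∑ i ∈ Finset.range N, |g i| := by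
    intro m hm
    rw [← htel m]
    calc |∑ i ∈ Finset.range m, g i| ≤ ∑ i ∈ Finset.range m, |g i| :=
          Finset.abs_sum_le_sum_abs _ _
      _ ≤ ∑ i ∈ Finset.range N, |g i| := by
          apply Finset.sum_le_sum_of_subset_of_nonneg (Finset.range_subset_range.2 hm)
          intro i _ _; exact abs_nonneg _
  have hCS1 : (∑ i ∈ Finset.range N, |g i|)^2 ≤ (N:ℝ) * SΔ := by
    have h := Finset.sum_mul_sq_le_sq_mul_sq (Finset.range N) (fun _ => (1:ℝ)) (fun i => |g i|)
    simp only [one_mul, one_pow, sq_abs, Finset.sum_const, Finset.card_range,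
      nsmul_eq_mul, mul_one] at h
    exact h
  have hMB : M ≤ Real.sqrt ((N:ℝ) * SΔ) := by
    apply hMub
    intro k hk
    obtain ⟨hk0, hkN⟩ := hk
    obtain ⟨m, rfl⟩ : ∃ m : ℕ, k = (m:ℤ) := ⟨k.toNat, by omega⟩
    have hm : m ≤ N := by exact_mod_cast hkN
    calc |x (m:ℤ)| = |f m| := rfl
      _ ≤ ∑ i ∈ Finset.range N, |g i| := hB1 m hm
      _ ≤ Real.sqrt ((N:ℝ) * SΔ) := by
          rw [← Real.sqrt_sq (Finset.sum_nonneg fun i _ => abs_nonneg (g i))]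
          exact Real.sqrt_le_sqrt hCS1
  -- (5) SΔ ≤ N^2 * SE
  have hsumg0 : ∑ i ∈ Finset.range N, g i = 0 := by rw [htel, hfN]
  set B : ℝ := ∑ i ∈ Finset.range (N-1), |g (i+1) - g i| with hBdef
  have hB0 : 0 ≤ B := Finset.sum_nonneg fun i _ => abs_nonneg _
  have hgdiff : ∀ j k : ℕ, j < N → k < N → |g j - g k| ≤ B := by
    have key : ∀ j k : ℕ, k ≤ j → j < N → |g j - g k| ≤ B := by
      intro j k hkj hj
      have h1 : ∑ i ∈ Finset.Ico k j, (g (i+1) - g i) = g j - g k := by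
        rw [Finset.sum_Ico_eq_sub _ hkj, Finset.sum_range_sub (fun i => g i),
          Finset.sum_range_sub (fun i => g i)]
        ring
      rw [← h1]
      calc |∑ i ∈ Finset.Ico k j, (g (i+1) - g i)| ≤ ∑ i ∈ Finset.Ico k j, |g (i+1) - g i| :=
            Finset.abs_sum_le_sum_abs _ _
        _ ≤ B := by
            apply Finset.sum_le_sum_of_subset_of_nonneg
            · intro i hi
              simp only [Finset.mem_Ico] at hi
              simp only [Finset.mem_range]
              omega
            · intro i _ _; exact abs_nonneg _
    intro j k hj hk
    rcases le_total k j with h | h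
    · exact key j k h hj
    · rw [abs_sub_comm]; exact key k j h hk
  have hgB : ∀ j : ℕ, j < N → |g j| ≤ B := by
    intro j hj
    have h1 : (N:ℝ) * g j = ∑ k ∈ Finset.range N, (g j - g k) := by
      rw [Finset.sum_sub_distrib, hsumg0, Finset.sum_const, Finset.card_range,
        nsmul_eq_mul]
      ring
    have h2 : |(N:ℝ) * g j| ≤ (N:ℝ) * B := by
      rw [h1]
      calc |∑ k ∈ Finset.range N, (g j - g k)| ≤ ∑ k ∈ Finset.range N, |g j - g k| :=
            Finset.abs_sum_le_sum_abs _ _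
        _ ≤ ∑ _k ∈ Finset.range N, B := Finset.sum_le_sum fun k hk =>
            hgdiff j k hj (Finset.mem_range.1 hk)
        _ = (N:ℝ) * B := by rw [Finset.sum_const, Finset.card_range, nsmul_eq_mul]
    rw [abs_mul, abs_of_nonneg (by positivity : (0:ℝ) ≤ (N:ℝ))] at h2
    have hNpos : (0:ℝ) < (N:ℝ) := by exact_mod_cast (by omega : 0 < N)
    exact le_of_mul_le_mul_left h2 hNpos
  have hCS2 : B^2 ≤ (N:ℝ) * SE := by
    have h := Finset.sum_mul_sq_le_sq_mul_sq (Finset.range (N-1)) (fun _ => (1:ℝ))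
      (fun i => |g (i+1) - g i|)
    simp only [one_mul, one_pow, sq_abs, Finset.sum_const, Finset.card_range,
      nsmul_eq_mul, mul_one] at h
    have hcard : ((N-1:ℕ):ℝ) ≤ (N:ℝ) := by exact_mod_cast Nat.sub_le N 1
    calc B^2 ≤ ((N-1:ℕ):ℝ) * SE := h
      _ ≤ (N:ℝ) * SE := by nlinarith
  have hSΔE : SΔ ≤ (N:ℝ)^2 * SE := by
    have h1 : SΔ ≤ ∑ _i ∈ Finset.range N, B^2 := by
      apply Finset.sum_le_sum
      intro i hi
      have h := hgB i (Finset.mem_range.1 hi)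
      calc (g i)^2 = |g i|^2 := (sq_abs _).symm
        _ ≤ B^2 := by nlinarith [abs_nonneg (g i)]
    rw [Finset.sum_const, Finset.card_range, nsmul_eq_mul] at h1
    nlinarith
  -- Assemble
  have hsqrtN0 : (0:ℝ) ≤ (N:ℝ) := by positivity
  refine ⟨?_, ?_, ?_, ?_, ?_⟩
  · rw [hE, hDelta]
    have h1 : Real.sqrt SE ≤ Real.sqrt (4 * SΔ) := Real.sqrt_le_sqrt hSE4
    rw [Real.sqrt_mul (by norm_num) SΔ, show Real.sqrt 4 = 2 by
      rw [show (4:ℝ) = 2^2 by norm_num, Real.sqrt_sq (by norm_num)]] at h1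
    linarith
  · rw [hDelta, hNn]
    have h1 : Real.sqrt SΔ ≤ Real.sqrt (4 * SN) := Real.sqrt_le_sqrt hSΔ4
    rw [Real.sqrt_mul (by norm_num) SN, show Real.sqrt 4 = 2 by
      rw [show (4:ℝ) = 2^2 by norm_num, Real.sqrt_sq (by norm_num)]] at h1
    linarith
  · rw [hNn]
    calc Real.sqrt SN ≤ Real.sqrt ((N:ℝ) * M^2) := Real.sqrt_le_sqrt hSNM
      _ = Real.sqrt N * M := by
          rw [Real.sqrt_mul hsqrtN0, Real.sqrt_sq hM0]
  · rw [hDelta]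
    calc Real.sqrt N * M ≤ Real.sqrt N * Real.sqrt ((N:ℝ) * SΔ) :=
          mul_le_mul_of_nonneg_left hMB (Real.sqrt_nonneg _)
      _ = (N:ℝ) * Real.sqrt SΔ := by
          rw [Real.sqrt_mul hsqrtN0, ← mul_assoc, Real.mul_self_sqrt hsqrtN0]
  · rw [hDelta, hE]
    calc (N:ℝ) * Real.sqrt SΔ ≤ (N:ℝ) * Real.sqrt ((N:ℝ)^2 * SE) :=
          mul_le_mul_of_nonneg_left (Real.sqrt_le_sqrt hSΔE) hsqrtN0
      _ = (N:ℝ)^2 * Real.sqrt SE := by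
          rw [Real.sqrt_mul (sq_nonneg ((N:ℝ))) SE, Real.sqrt_sq hsqrtN0]
          ring
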